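/- Let f₁,…,f_m, g : ℝⁿ → ℝ, S ⊆ ℝⁿ, and φ ∈ ℝᵐ. If S is an F_σ set and Γ(x) = (f₁(x),…,f_m(x),g(x)) is continuous, then inf_{μ ∈ M(S,φ)} E_μ[g(X)] = inf_{μ ∈ M_{m+1}(S,φ)} E_μ[g(X)] and sup_{μ ∈ M(S,φ)} E_μ[g(X)] = sup_{μ ∈ M_{m+1}(S,φ)} E_μ[g(X)] (in the extended reals). -/

import Mathlib

open MeasureTheory Set Filter Topology
open scoped BigOperators ENNReal

noncomputable section

/-- The support of a measure: points all of whose open neighborhoods have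
positive measure. -/
def msupport {E : Type*} [TopologicalSpace E] [MeasurableSpace E]
    (μ : Measure E) : Set E :=
  {x | ∀ U : Set E, IsOpen U → x ∈ U → μ U ≠ 0}

/-- `M(S,φ)`: Borel probability measures with support contained in `S`,
with `E[f i] = φ i` for all `i` and `E[g]` finite. -/
def MC (n m : ℕ) (f : (Fin n → ℝ) → Fin m → ℝ) (g : (Fin n → ℝ) → ℝ)
    (S : Set (Fin n → ℝ)) (φ : Fin m → ℝ) : Set (Measure (Fin n → ℝ)) :=
  {μ | IsProbabilityMeasure μ ∧ msupport μ ⊆ S ∧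
    (∀ i, Integrable (fun x => f x i) μ) ∧ (∀ i, ∫ x, f x i ∂μ = φ i) ∧
    Integrable g μ}

/-- `M_k(S,φ)`: members of `M(S,φ)` whose support has at most `k` points. -/
def MCk (n m : ℕ) (f : (Fin n → ℝ) → Fin m → ℝ) (g : (Fin n → ℝ) → ℝ)
    (S : Set (Fin n → ℝ)) (φ : Fin m → ℝ) (k : ℕ) : Set (Measure (Fin n → ℝ)) :=
  {μ | μ ∈ MC n m f g S φ ∧ (msupport μ).encard ≤ (k : ℕ∞)}

/-!
The barycenter `(φ, E_μ g)` of the push-forward of `μ` by `Γ = (f, g)` lies in the convex hull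
of `Γ (supp μ)`, not merely in its closure: otherwise a functional separating it properly from
that hull would be constant `μ`-a.e. along `Γ`, hence, by continuity, on all of `Γ (supp μ)`.
By Carathéodory it lies in a simplex with vertices in `Γ (supp μ)`. Minimising the last
coordinate over the fibre of this simplex above `φ` gives a boundary point of the simplex, which
lies in a facet, so `m + 1` vertices suffice. Weights on preimages of these vertices in
`supp μ ⊆ S` give a measure in `M_{m+1}(S, φ)` with no larger `E g`; for the supremum apply this
to `-g`.
-/

section Separation

variable {E : Type*} [NormedAddCommGroup E] [NormedSpace ℝ E] {C : Set E} {b : E}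

theorem Convex.exists_le_lt_of_notMem_interior (hC : Convex ℝ C)
    (hCint : (interior C).Nonempty) (hb : b ∉ interior C) :
    ∃ ℓ : StrongDual ℝ E, (∀ x ∈ C, ℓ x ≤ ℓ b) ∧ ∃ x ∈ C, ℓ x < ℓ b := by
  obtain ⟨ℓ, hℓ⟩ := geometric_hahn_banach_open_point hC.interior isOpen_interior hb
  obtain ⟨y, hy⟩ := hCint
  refine ⟨ℓ, fun x hx => ?_, y, interior_subset hy, hℓ y hy⟩
  have hx' : x ∈ closure (interior C) := by
    rw [hC.closure_interior_eq_closure_of_nonempty_interior ⟨y, hy⟩]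
    exact subset_closure hx
  exact closure_minimal (fun z hz => (hℓ z hz).le) (isClosed_Iic.preimage ℓ.continuous) hx'

theorem Convex.exists_le_lt_of_mem_affineSpan_of_notMem [FiniteDimensional ℝ E]
    (hC : Convex ℝ C) (hbC : b ∈ affineSpan ℝ C) (hb : b ∉ C) :
    ∃ ℓ : StrongDual ℝ E, (∀ x ∈ C, ℓ x ≤ ℓ b) ∧ ∃ x ∈ C, ℓ x < ℓ b := by
  have : Nonempty C := ((affineSpan_nonempty ℝ).1 ⟨b, hbC⟩).to_subtype
  set A := affineSpan ℝ C
  -- Translate `C` by `-b` into the direction of its affine span, where it has interior.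
  set e := AffineIsometryEquiv.vaddConst ℝ (⟨b, hbC⟩ : A)
  have he : ∀ v, (e v : E) = v + b := fun v => by simp [e]
  set D : Set A.direction := e ⁻¹' ((↑) ⁻¹' C) with hDdef
  have hD : Convex ℝ D := hC.affine_preimage (A.subtype.comp e.toAffineEquiv.toAffineMap)
  have hDint : (interior D).Nonempty := by
    rw [hD.interior_nonempty_iff_affineSpan_eq_top, hDdef,
      ← AffineIsometryEquiv.coe_toAffineEquiv, ← AffineSubspace.comap_span, affineSpan_coe_preimage_eq_top, AffineSubspace.comap_top]
  have h0 : (0 : A.direction) ∉ interior D := fun h =>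
    hb (by simpa [hDdef, he] using interior_subset h)
  obtain ⟨ℓ₀, hℓ₀D, v, hvD, hv⟩ := hD.exists_le_lt_of_notMem_interior hDint h0
  obtain ⟨ℓ, hℓ, -⟩ := exists_extension_norm_eq A.direction ℓ₀
  have hℓe : ∀ v, ℓ (e v) = ℓ₀ v + ℓ b := fun v => by rw [he, map_add, hℓ]
  refine ⟨ℓ, fun x hx => ?_, e v, hvD, by simpa [hℓe] using hv⟩
  obtain ⟨u, hu⟩ := e.surjective ⟨x, subset_affineSpan ℝ C hx⟩
  have huD : ℓ₀ u ≤ 0 := by simpa using hℓ₀D u (by simp [hDdef, hu, hx])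
  have hxu : x = e u := by rw [hu]
  rw [hxu, hℓe]
  linarith

end Separation

theorem integral_mem_convexHull_image_support {X E : Type*} [TopologicalSpace X]
    [HereditarilyLindelofSpace X] [MeasurableSpace X] [NormedAddCommGroup E] [NormedSpace ℝ E]
    [FiniteDimensional ℝ E] {Γ : X → E} (hΓ : Continuous Γ) (μ : Measure X)
    [IsProbabilityMeasure μ] (hint : Integrable Γ μ) :
    ∫ x, Γ x ∂μ ∈ convexHull ℝ (Γ '' μ.support) := by
  set C := convexHull ℝ (Γ '' μ.support)
  set b := ∫ x, Γ x ∂μ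
  have hΓC : ∀ᵐ x ∂μ, Γ x ∈ C := by
    filter_upwards [μ.support_mem_ae] with x hx
    exact subset_convexHull ℝ _ (mem_image_of_mem Γ hx)
  have hbA : b ∈ affineSpan ℝ C :=
    (affineSpan ℝ C).convex.integral_mem (affineSpan ℝ C).closed_of_finiteDimensional
      (hΓC.mono fun x hx => subset_affineSpan ℝ C hx) hint
  by_contra hb
  obtain ⟨ℓ, hℓC, x₀, hx₀C, hx₀⟩ :=
    (convex_convexHull ℝ _).exists_le_lt_of_mem_affineSpan_of_notMem hbA hb
  have hℓint : Integrable (fun x => ℓ b - ℓ (Γ x)) μ :=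
    (integrable_const _).sub (ℓ.integrable_comp hint)
  have hℓ : ∀ᵐ x ∂μ, ℓ (Γ x) = ℓ b := by
    have hzero : ∫ x, ℓ b - ℓ (Γ x) ∂μ = 0 := by
      rw [integral_sub (integrable_const _) (ℓ.integrable_comp hint), ℓ.integral_comp_comm hint]
      simp [b]
    have hnonneg : 0 ≤ᵐ[μ] fun x => ℓ b - ℓ (Γ x) :=
      hΓC.mono fun x hx => sub_nonneg.2 (hℓC _ hx)
    filter_upwards [(integral_eq_zero_iff_of_nonneg_ae hnonneg hℓint).1 hzero] with x hx
    exact (sub_eq_zero.1 hx).symm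
  have hsupp : μ.support ⊆ {x | ℓ (Γ x) = ℓ b} :=
    Measure.support_subset_of_isClosed (isClosed_eq (ℓ.continuous.comp hΓ) continuous_const) hℓ
  have hCℓ : C ⊆ {y | ℓ y = ℓ b} :=
    convexHull_min (image_subset_iff.2 hsupp)
      ((convex_singleton (ℓ b)).linear_preimage ℓ.toLinearMap)
  exact hx₀.ne (hCℓ hx₀C)

theorem exists_snd_lt_of_mem_interior {E : Type*} [TopologicalSpace E] {C : Set (E × ℝ)}
    {q : E × ℝ} (hq : q ∈ interior C) : ∃ q' ∈ C, q'.1 = q.1 ∧ q'.2 < q.2 := by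
  have h : ∀ᶠ s in 𝓝[<] q.2, (q.1, s) ∈ C :=
    nhdsWithin_le_nhds <| (Continuous.prodMk_right q.1).continuousAt.preimage_mem_nhds
      (mem_interior_iff_mem_nhds.1 hq)
  obtain ⟨s, hs, hslt⟩ := (h.and self_mem_nhdsWithin).exists
  exact ⟨(q.1, s), hs, rfl, hslt⟩

theorem AffineIndependent.exists_mem_convexHull_erase_of_notMem_interior {E : Type*}
    [NormedAddCommGroup E] [NormedSpace ℝ E] [DecidableEq E] {t : Finset E}
    (hind : AffineIndependent ℝ ((↑) : t → E)) (hspan : affineSpan ℝ (t : Set E) = ⊤) {q : E}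
    (hq : q ∈ convexHull ℝ ↑t) (hqint : q ∉ interior (convexHull ℝ ↑t)) :
    ∃ v ∈ t, q ∈ convexHull ℝ ↑(t.erase v) := by
  let B : AffineBasis t ℝ E := ⟨(↑), hind, by rwa [Subtype.range_coe]⟩
  have hrange : range B = t := Subtype.range_coe
  have hnonneg : ∀ j, 0 ≤ B.coord j q := by
    rwa [← hrange, B.convexHull_eq_nonneg_coord] at hq
  obtain ⟨i, hi⟩ : ∃ i, B.coord i q = 0 := by
    rw [← hrange, B.interior_convexHull] at hqint
    simp only [mem_ofPred_eq, not_forall, not_lt] at hqint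
    obtain ⟨i, hi⟩ := hqint
    exact ⟨i, le_antisymm hi (hnonneg i)⟩
  have hsum : ∑ j ∈ Finset.univ.erase i, B.coord j q = 1 := by
    rw [Finset.sum_erase (f := fun j => B.coord j q) _ hi, B.sum_coord_apply_eq_one]
  have hcomb : ∑ j ∈ Finset.univ.erase i, B.coord j q • B j = q := by
    rw [Finset.sum_erase _ (by simp [hi]), B.linear_combination_coord_eq_self]
  refine ⟨i, i.2, ?_⟩
  rw [← hcomb, ← Finset.centerMass_eq_of_sum_1 _ _ hsum]
  refine Finset.centerMass_mem_convexHull _ (fun j _ => hnonneg j) (by rw [hsum]; exact one_pos)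
    fun j hj => ?_
  exact Finset.mem_erase.2 ⟨fun h => Finset.ne_of_mem_erase hj (Subtype.ext h), j.2⟩

theorem exists_finset_card_le_of_mem_convexHull_prod {E : Type*} [NormedAddCommGroup E]
    [NormedSpace ℝ E] [FiniteDimensional ℝ E] {A : Set (E × ℝ)} {p : E × ℝ}
    (hp : p ∈ convexHull ℝ A) :
    ∃ t : Finset (E × ℝ), ↑t ⊆ A ∧ t.card ≤ Module.finrank ℝ E + 1 ∧
      ∃ q ∈ convexHull ℝ (t : Set (E × ℝ)), q.1 = p.1 ∧ q.2 ≤ p.2 := by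
  classical
  have hrank : Module.finrank ℝ (E × ℝ) = Module.finrank ℝ E + 1 := by
    simp [Module.finrank_prod]
  rw [convexHull_eq_union] at hp
  simp only [mem_iUnion, exists_prop] at hp
  obtain ⟨t, htA, hind, hpt⟩ := hp
  have hcard : t.card ≤ Module.finrank ℝ E + 2 := by
    simpa [hrank] using hind.card_le_finrank_succ.trans
      (Nat.succ_le_succ (Submodule.finrank_le _))
  rcases hcard.lt_or_eq with hlt | heq
  · exact ⟨t, htA, by omega, p, hpt, rfl, le_rfl⟩
  have hspan : affineSpan ℝ (t : Set (E × ℝ)) = ⊤ := by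
    simpa using hind.affineSpan_eq_top_iff_card_eq_finrank_add_one.2 (by simp [heq, hrank])
  obtain ⟨q, ⟨hqt, hq1⟩, hqmin⟩ :=
    ((t.finite_toSet.isCompact_convexHull ℝ).inter_right
      (isClosed_eq continuous_fst continuous_const)).exists_isMinOn
      ⟨p, hpt, rfl⟩ continuous_snd.continuousOn
  have hqint : q ∉ interior (convexHull ℝ (t : Set (E × ℝ))) := fun h => by
    obtain ⟨q', hq't, hq'1, hq'2⟩ := exists_snd_lt_of_mem_interior h
    exact (hqmin ⟨hq't, hq'1.trans hq1⟩).not_gt hq'2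
  obtain ⟨v, hv, hqv⟩ := hind.exists_mem_convexHull_erase_of_notMem_interior hspan hqt hqint
  refine ⟨t.erase v, (Finset.coe_subset.2 (t.erase_subset v)).trans htA, ?_, q, hqv, hq1,
    hqmin ⟨hpt, rfl⟩⟩
  rw [Finset.card_erase_of_mem hv, heq]
  omega

section DiracCombination

variable {ι X F : Type*} [MeasurableSpace X] (t : Finset ι) (w : ι → ℝ) (ξ : ι → X)

def diracCombination : Measure X :=
  ∑ i ∈ t, ENNReal.ofReal (w i) • Measure.dirac (ξ i)

variable {t w}

theorem isProbabilityMeasure_diracCombination (hw : ∀ i ∈ t, 0 ≤ w i) (hw₁ : ∑ i ∈ t, w i = 1) :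
    IsProbabilityMeasure (diracCombination t w ξ) := by
  constructor
  simp only [diracCombination, Measure.coe_finsetSum, Finset.sum_apply, Measure.smul_apply,
    measure_univ, smul_eq_mul, mul_one]
  rw [← ENNReal.ofReal_sum_of_nonneg hw, hw₁, ENNReal.ofReal_one]

variable [MeasurableSingletonClass X]

theorem support_diracCombination_subset [TopologicalSpace X] [T1Space X] :
    (diracCombination t w ξ).support ⊆ ξ '' t := by
  refine Measure.support_subset_of_isClosed ((t.finite_toSet.image ξ).isClosed) ?_
  rw [mem_ae_iff, diracCombination, Measure.coe_finsetSum, Finset.sum_apply]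
  refine Finset.sum_eq_zero fun i hi => ?_
  simpa [Measure.smul_apply] using Or.inr ⟨i, hi, rfl⟩

variable [NormedAddCommGroup F]

variable (t w) in
theorem integrable_diracCombination (h : X → F) : Integrable h (diracCombination t w ξ) :=
  integrable_finsetSum_measure.2 fun _ _ =>
    (integrable_dirac enorm_lt_top).smul_measure ENNReal.ofReal_ne_top

theorem integral_diracCombination [NormedSpace ℝ F] [CompleteSpace F] (hw : ∀ i ∈ t, 0 ≤ w i)
    (h : X → F) : ∫ x, h x ∂diracCombination t w ξ = ∑ i ∈ t, w i • h (ξ i) := by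
  rw [diracCombination, integral_finsetSum_measure fun i _ =>
    (integrable_dirac enorm_lt_top).smul_measure ENNReal.ofReal_ne_top]
  refine Finset.sum_congr rfl fun i hi => ?_
  rw [integral_smul_measure, integral_dirac, ENNReal.toReal_ofReal (hw i hi)]

end DiracCombination

theorem msupport_eq_support {E : Type*} [TopologicalSpace E] [MeasurableSpace E]
    (μ : Measure E) : msupport μ = μ.support := by
  simp [msupport, Measure.support_eq_forall_isOpen, pos_iff_ne_zero, imp.swap]

section Reduction

variable {n m : ℕ} {f : (Fin n → ℝ) → Fin m → ℝ} {g : (Fin n → ℝ) → ℝ} {S : Set (Fin n → ℝ)}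
  {φ : Fin m → ℝ} {μ : Measure (Fin n → ℝ)}

theorem exists_mem_MCk_integral_le (hΓ : Continuous fun x => (f x, g x))
    (hμ : μ ∈ MC n m f g S φ) :
    ∃ ν ∈ MCk n m f g S φ (m + 1), ∫ x, g x ∂ν ≤ ∫ x, g x ∂μ := by
  classical
  obtain ⟨hprob, hsupp, hfint, hfeq, hgint⟩ := hμ
  rw [msupport_eq_support] at hsupp
  have hp := integral_mem_convexHull_image_support hΓ μ ((Integrable.of_eval hfint).prodMk hgint)
  rw [integral_pair (Integrable.of_eval hfint) hgint] at hp
  obtain ⟨t, htΓ, hcard, q, hqt, hq1, hq2⟩ := exists_finset_card_le_of_mem_convexHull_prod hp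
  choose! ξ hξsupp hξΓ using fun y (hy : y ∈ t) => htΓ hy
  obtain ⟨w, hw₀, hw₁, hwq⟩ := Finset.mem_convexHull'.1 hqt
  set ν := diracCombination t w ξ
  have hν : IsProbabilityMeasure ν := isProbabilityMeasure_diracCombination ξ hw₀ hw₁
  have hνint : ∀ h : (Fin n → ℝ) → ℝ, Integrable h ν := integrable_diracCombination t w ξ
  have hνq : (∫ x, f x ∂ν, ∫ x, g x ∂ν) = q := by
    rw [← integral_pair (Integrable.of_eval fun i => hνint _) (hνint g),
      integral_diracCombination ξ hw₀, ← hwq]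
    exact Finset.sum_congr rfl fun y hy => congrArg (w y • ·) (hξΓ y hy)
  have hνf : ∫ x, f x ∂ν = q.1 := congrArg Prod.fst hνq
  refine ⟨ν, ⟨⟨hν, ?_, fun i => hνint _, fun i => ?_, hνint g⟩, ?_⟩, ?_⟩
  · rw [msupport_eq_support]
    exact (support_diracCombination_subset ξ).trans
      (image_subset_iff.2 fun y hy => hsupp (hξsupp y hy))
  · rw [← eval_integral (fun i => hνint _), hνf, hq1]
    exact (eval_integral hfint i).trans (hfeq i)
  · rw [msupport_eq_support]
    calc (diracCombination t w ξ).support.encard ≤ (ξ '' t).encard :=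
          encard_le_encard (support_diracCombination_subset ξ)
      _ ≤ (t : Set ((Fin m → ℝ) × ℝ)).encard := encard_image_le ξ _
      _ ≤ (m + 1 : ℕ) := by
          rw [encard_coe_eq_coe_finsetCard]
          exact_mod_cast hcard.trans (by simp)
  · exact (congrArg Prod.snd hνq).le.trans hq2

theorem MC_neg : MC n m f (fun x => -g x) S φ = MC n m f g S φ := by
  ext μ
  simp [MC]

theorem exists_mem_MCk_le_integral (hΓ : Continuous fun x => (f x, g x))
    (hμ : μ ∈ MC n m f g S φ) :
    ∃ ν ∈ MCk n m f g S φ (m + 1), ∫ x, g x ∂μ ≤ ∫ x, g x ∂ν := by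
  obtain ⟨ν, ⟨hν, hνcard⟩, hle⟩ :=
    exists_mem_MCk_integral_le (g := fun x => -g x) (hΓ.fst.prodMk hΓ.snd.neg) (MC_neg ▸ hμ)
  refine ⟨ν, ⟨MC_neg ▸ hν, hνcard⟩, ?_⟩
  simpa only [integral_neg, neg_le_neg_iff] using hle

end Reduction

theorem Fsigma_reduction_general {n m : ℕ}
    (f : (Fin n → ℝ) → Fin m → ℝ) (g : (Fin n → ℝ) → ℝ)
    (S : Set (Fin n → ℝ)) (φ : Fin m → ℝ)
    (hΓ : Continuous fun x => (f x, g x)) :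
    (⨅ μ ∈ MC n m f g S φ, ((∫ x, g x ∂μ : ℝ) : EReal)) =
        (⨅ μ ∈ MCk n m f g S φ (m + 1), ((∫ x, g x ∂μ : ℝ) : EReal)) ∧
    (⨆ μ ∈ MC n m f g S φ, ((∫ x, g x ∂μ : ℝ) : EReal)) =
        (⨆ μ ∈ MCk n m f g S φ (m + 1), ((∫ x, g x ∂μ : ℝ) : EReal)) := by
  refine ⟨le_antisymm (iInf₂_mono' fun ν hν => ⟨ν, hν.1, le_rfl⟩) (iInf₂_mono' fun μ hμ => ?_),
    le_antisymm (iSup₂_mono' fun μ hμ => ?_) (iSup₂_mono' fun ν hν => ⟨ν, hν.1, le_rfl⟩)⟩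
  · obtain ⟨ν, hν, hle⟩ := exists_mem_MCk_integral_le hΓ hμ
    exact ⟨ν, hν, EReal.coe_le_coe_iff.2 hle⟩
  · obtain ⟨ν, hν, hle⟩ := exists_mem_MCk_le_integral hΓ hμ
    exact ⟨ν, hν, EReal.coe_le_coe_iff.2 hle⟩

/-- if `S` is `F_σ` and `Γ` is continuous, the extrema over
`M(S,φ)` equal the extrema over `M_{m+1}(S,φ)`. -/
theorem Fsigma_reduction {n m : ℕ}
    (f : (Fin n → ℝ) → Fin m → ℝ) (g : (Fin n → ℝ) → ℝ)
    (S : Set (Fin n → ℝ)) (φ : Fin m → ℝ)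
    (hS : ∃ F : ℕ → Set (Fin n → ℝ), (∀ i, IsClosed (F i)) ∧ S = ⋃ i, F i)
    (hΓ : Continuous fun x => (f x, g x)) :
    (⨅ μ ∈ MC n m f g S φ, ((∫ x, g x ∂μ : ℝ) : EReal)) =
        (⨅ μ ∈ MCk n m f g S φ (m + 1), ((∫ x, g x ∂μ : ℝ) : EReal)) ∧
    (⨆ μ ∈ MC n m f g S φ, ((∫ x, g x ∂μ : ℝ) : EReal)) =
        (⨆ μ ∈ MCk n m f g S φ (m + 1), ((∫ x, g x ∂μ : ℝ) : EReal)) :=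
  Fsigma_reduction_general f g S φ hΓ
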